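/- arXiv:2307.08999 — 8 statements merged into one kernel-verified Lean document; each statement's English description precedes it below -/
import Mathlib

section
/- Fix a finite multiset of pairs (x_t, y_t) with y_t ∈ {0,1}, a level p ∈ [0,1], a bound B ≥ 1, and a function f with f(x_t)² ≤ B for all t. Suppose the average calibration error (1/n) Σ_t f(x_t)(y_t - p) is at least α for some α ∈ [0,1]. Then, setting η = min(1, α / ((1/n) Σ_t f(x_t)²)) and f'(x) = p + η f(x), one has (1/n) Σ_t [(p - y_t)² - (f'(x_t) - y_t)²] ≥ α²/B. Moreover f'(x_t)² ≤ (1+√B)² for all t. -/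
/-!
Moving from the constant forecast `p` to `p + η f` changes the average squared loss by
`2 η C - η² Q`, where `C` is the average correlation of `f` with the residuals `y - p` and
`Q` is the average of `f²`. Since `η Q ≤ α ≤ C`, this gain is at least `η α`; and `η ≥ α / B`,
because `α ≤ 1 ≤ B` and `Q ≤ B`.
-/

open Finset
open scoped BigOperators

section Expect

variable {ι K : Type*} [Field K] [LinearOrder K] [IsStrictOrderedRing K]

lemma Finset.one_div_card_mul_sum_eq_expect (s : Finset ι) (g : ι → K) :
    1 / (#s : K) * ∑ i ∈ s, g i = 𝔼 i ∈ s, g i := by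
  rw [expect_eq_sum_div_card, one_div_mul_eq_div]

lemma Finset.expect_sq_pos_of_expect_mul_ne_zero {s : Finset ι} {a b : ι → K}
    (h : 𝔼 i ∈ s, a i * b i ≠ 0) : 0 < 𝔼 i ∈ s, a i ^ 2 := by
  obtain ⟨i, hi, hab⟩ := exists_ne_zero_of_expect_ne_zero h
  exact expect_pos' (fun j _ ↦ sq_nonneg (a j))
    ⟨i, hi, sq_pos_of_ne_zero (left_ne_zero_of_mul hab)⟩

lemma Finset.expect_sq_sub_sq_add_mul (s : Finset ι) (y a : ι → K) (p η : K) :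
    𝔼 i ∈ s, ((p - y i) ^ 2 - (p + η * a i - y i) ^ 2)
      = 2 * η * 𝔼 i ∈ s, a i * (y i - p) - η ^ 2 * 𝔼 i ∈ s, a i ^ 2 := by
  have pointwise : ∀ i, (p - y i) ^ 2 - (p + η * a i - y i) ^ 2
      = 2 * η * (a i * (y i - p)) - η ^ 2 * a i ^ 2 := fun i ↦ by ring
  simp only [pointwise, expect_sub_distrib, mul_expect]

end Expect

section StepSize

variable {K : Type*} [Field K] [LinearOrder K] [IsStrictOrderedRing K]

lemma min_one_div_mul_le {α Q : K} (hα : 0 ≤ α) (hQ : 0 ≤ Q) : min 1 (α / Q) * Q ≤ α := by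
  rcases hQ.eq_or_lt with rfl | hQ
  · simpa using hα
  · calc min 1 (α / Q) * Q ≤ α / Q * Q := by gcongr; exact min_le_right _ _
      _ = α := div_mul_cancel₀ α hQ.ne'

lemma div_le_min_one_div {α Q B : K} (hα : 0 ≤ α) (hα1 : α ≤ 1) (hB : 1 ≤ B) (hQ : 0 < Q)
    (hQB : Q ≤ B) : α / B ≤ min 1 (α / Q) :=
  le_min (div_le_one_of_le₀ (hα1.trans hB) (zero_le_one.trans hB))
    (div_le_div_of_nonneg_left hα hQ hQB)

lemma mul_le_two_mul_mul_sub_sq_mul {η α C Q : K} (hη : 0 ≤ η) (hαC : α ≤ C)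
    (hηQ : η * Q ≤ α) : η * α ≤ 2 * η * C - η ^ 2 * Q := by
  nlinarith [mul_le_mul_of_nonneg_left hηQ hη, mul_le_mul_of_nonneg_left hαC hη]

end StepSize

lemma sq_add_mul_le_one_add_sqrt_sq {p η a B : ℝ} (hp : |p| ≤ 1) (hη : |η| ≤ 1)
    (ha : a ^ 2 ≤ B) : (p + η * a) ^ 2 ≤ (1 + √B) ^ 2 := by
  have hbound : |p + η * a| ≤ 1 + √B :=
    calc |p + η * a| ≤ |p| + |η| * |a| := by rw [← abs_mul]; exact abs_add_le _ _
      _ ≤ 1 + 1 * √B := by gcongr; exact Real.abs_le_sqrt ha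
      _ = 1 + √B := by ring
  exact sq_le_sq' (neg_le_of_abs_le hbound) (le_of_abs_le hbound)

theorem calibration_error_implies_swap_regret_general {ι X : Type*} (S : Finset ι)
    (x : ι → X) (y : ι → ℝ)
    (p : ℝ) (hp : p ∈ Set.Icc (0:ℝ) 1) (B : ℝ) (hB : 1 ≤ B)
    (f : X → ℝ) (hf : ∀ t ∈ S, (f (x t)) ^ 2 ≤ B)
    (α : ℝ) (hα : α ∈ Set.Icc (0:ℝ) 1)
    (hcal : α ≤ (1 / (S.card : ℝ)) * ∑ t ∈ S, f (x t) * (y t - p))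
    (η : ℝ) (hη : η = min 1 (α / ((1 / (S.card : ℝ)) * ∑ t ∈ S, (f (x t)) ^ 2)))
    (f' : X → ℝ) (hf' : ∀ z, f' z = p + η * f z) :
    α ^ 2 / B ≤ (1 / (S.card : ℝ)) * ∑ t ∈ S, ((p - y t) ^ 2 - (f' (x t) - y t) ^ 2) ∧
      ∀ t ∈ S, (f' (x t)) ^ 2 ≤ (1 + Real.sqrt B) ^ 2 := by
  obtain ⟨hα0, hα1⟩ := hα
  simp only [one_div_card_mul_sum_eq_expect, hf'] at hcal hη ⊢
  have hQ0 : 0 ≤ 𝔼 t ∈ S, f (x t) ^ 2 := expect_nonneg fun t _ ↦ sq_nonneg _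
  have hη0 : 0 ≤ η := hη ▸ le_min zero_le_one (div_nonneg hα0 hQ0)
  have hη1 : η ≤ 1 := hη ▸ min_le_left _ _
  refine ⟨?_, fun t ht ↦ sq_add_mul_le_one_add_sqrt_sq (abs_le.mpr ⟨by linarith [hp.1], hp.2⟩)
    (abs_le.mpr ⟨by linarith, hη1⟩) (hf t ht)⟩
  have hstep : α ^ 2 / B ≤ η * α := by
    rcases hα0.eq_or_lt with rfl | hαpos
    · simp
    have hQpos := expect_sq_pos_of_expect_mul_ne_zero (hαpos.trans_le hcal).ne'
    obtain ⟨t, ht, -⟩ := exists_ne_zero_of_expect_ne_zero hQpos.ne'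
    have hQB : 𝔼 t ∈ S, f (x t) ^ 2 ≤ B := expect_le ⟨t, ht⟩ hf
    calc α ^ 2 / B = α / B * α := by ring
      _ ≤ η * α := by gcongr; exact hη ▸ div_le_min_one_div hα0 hα1 hB hQpos hQB
  rw [expect_sq_sub_sq_add_mul]
  exact hstep.trans (mul_le_two_mul_mul_sub_sq_mul hη0 hcal (hη ▸ min_one_div_mul_le hα0 hQ0))

/-- If the average calibration error of forecast `p` against `f` is at least `α`, then the
affine shift `f'(x) = p + η f(x)` witnesses contextual swap regret at least `α²/B`,
and `f'` is bounded by `(1+√B)²`. -/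
theorem calibration_error_implies_swap_regret {ι X : Type*} (S : Finset ι) (hS : S.Nonempty)
    (x : ι → X) (y : ι → ℝ) (hy : ∀ t ∈ S, y t = 0 ∨ y t = 1)
    (p : ℝ) (hp : p ∈ Set.Icc (0:ℝ) 1) (B : ℝ) (hB : 1 ≤ B)
    (f : X → ℝ) (hf : ∀ t ∈ S, (f (x t)) ^ 2 ≤ B)
    (α : ℝ) (hα : α ∈ Set.Icc (0:ℝ) 1)
    (hcal : α ≤ (1 / (S.card : ℝ)) * ∑ t ∈ S, f (x t) * (y t - p))
    (η : ℝ) (hη : η = min 1 (α / ((1 / (S.card : ℝ)) * ∑ t ∈ S, (f (x t)) ^ 2)))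
    (f' : X → ℝ) (hf' : ∀ z, f' z = p + η * f z) :
    α ^ 2 / B ≤ (1 / (S.card : ℝ)) * ∑ t ∈ S, ((p - y t) ^ 2 - (f' (x t) - y t) ^ 2) ∧
      ∀ t ∈ S, (f' (x t)) ^ 2 ≤ (1 + Real.sqrt B) ^ 2 :=
  calibration_error_implies_swap_regret_general S x y p hp B hB f hf α hα hcal η hη f' hf'
end

section
/- Let P be a finite set of forecasts, and for each p ∈ P let S(p) be a finite set of indices with n(p) = |S(p)| and T = Σ_p n(p). Suppose: (a) for every family {f'_p} with f'_p(x)² ≤ (1+√B)² the contextual swap regret (1/T) Σ_p Σ_{t∈S(p)} [(p - y_t)² - (f'_p(x_t) - y_t)²] is at most α/B², and (b) the class F is closed under affine transformations and contains functions bounded by B with B ≥ 1. Then for every family {f_p} with f_p(x)² ≤ B, the L2-swap-multicalibration error Σ_p (n(p)/T) · ((1/n(p)) Σ_{t∈S(p)} f_p(x_t)(y_t - p))² is at most α. -/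
/-!
Fix a forecast `p` with rounds `S(p)`, `n = |S(p)|`, a bounded test function `g = f_p`, and put
`A = ∑ g(x_t)(y_t - p)`. It suffices to find an affine modification `c g + b`, bounded by `1 + √B`,
whose squared-loss gain over `p` on `S(p)` is at least `A² / (n B)`: the swap-regret hypothesis,
applied to these modifications, then bounds `∑ (n/T) (A/n)² ≤ (B² / T) ∑ gain ≤ α`.

If `p ∈ [0, 1]`, the step `p + η g` gains `2ηA - η² ∑ g² ≥ 2ηA - η² n B`, which is `A² / (n B)` at
`η = A / (n B)`; as `|y - p| ≤ 1` we have `|A| ≤ n √B`, so `|η g| ≤ 1`. If `p ∉ [0, 1]`, all `y_t - p`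
have one sign, so `|A| ≤ √B |∑ (y_t - p)|`, and the constant mean label gains `(∑ (y_t - p))² / n`.
-/

open Finset

section

variable {ι : Type*} (s : Finset ι) (y : ι → ℝ)

def squaredLossRegret (p : ℝ) (h : ι → ℝ) : ℝ :=
  ∑ i ∈ s, ((p - y i) ^ 2 - (h i - y i) ^ 2)

variable {s y}

lemma abs_sum_mul_le {g w : ι → ℝ} {t : ℝ} (hg : ∀ i ∈ s, |g i| ≤ t) :
    |∑ i ∈ s, g i * w i| ≤ t * ∑ i ∈ s, |w i| := by
  refine (abs_sum_le_sum_abs _ _).trans ?_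
  rw [mul_sum]
  gcongr with i hi
  rw [abs_mul]
  exact mul_le_mul_of_nonneg_right (hg i hi) (abs_nonneg _)

lemma sum_abs_eq_abs_sum {w : ι → ℝ} (hw : (∀ i ∈ s, 0 ≤ w i) ∨ ∀ i ∈ s, w i ≤ 0) :
    ∑ i ∈ s, |w i| = |∑ i ∈ s, w i| := by
  rcases hw with hw | hw
  · rw [abs_sum_of_nonneg hw]
    exact sum_congr rfl fun i hi => abs_of_nonneg (hw i hi)
  · rw [abs_of_nonpos (sum_nonpos hw), ← sum_neg_distrib]
    exact sum_congr rfl fun i hi => abs_of_nonpos (hw i hi)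

lemma squaredLossRegret_mul_add (g : ι → ℝ) (p η : ℝ) :
    squaredLossRegret s y p (fun i => η * g i + p) =
      2 * η * ∑ i ∈ s, g i * (y i - p) - η ^ 2 * ∑ i ∈ s, g i ^ 2 := by
  rw [squaredLossRegret, mul_sum, mul_sum, ← sum_sub_distrib]
  exact sum_congr rfl fun i _ => by ring

lemma squaredLossRegret_const_mean (hs : s.Nonempty) (p : ℝ) :
    squaredLossRegret s y p (fun _ => (∑ i ∈ s, y i) / #s) =
      (∑ i ∈ s, (y i - p)) ^ 2 / #s := by
  have hN : (#s : ℝ) ≠ 0 := by exact_mod_cast hs.card_pos.ne'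
  have hsummand : ∀ i ∈ s, (p - y i) ^ 2 - ((∑ j ∈ s, y j) / #s - y i) ^ 2 =
      (p ^ 2 - ((∑ j ∈ s, y j) / #s) ^ 2) - 2 * (p - (∑ j ∈ s, y j) / #s) * y i :=
    fun i _ => by ring
  rw [squaredLossRegret, sum_congr rfl hsummand, sum_sub_distrib, sum_sub_distrib, ← mul_sum,
    sum_const, sum_const, nsmul_eq_mul, nsmul_eq_mul, sum_sub_distrib, sum_const, nsmul_eq_mul]
  field_simp
  ring

lemma sq_sum_div_card_le_mul_squaredLossRegret_linear {g : ι → ℝ} {B : ℝ} (hB : 0 < B)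
    (hs : s.Nonempty) (hg : ∀ i ∈ s, g i ^ 2 ≤ B) (p : ℝ) :
    (∑ i ∈ s, g i * (y i - p)) ^ 2 / #s ≤
      B * squaredLossRegret s y p
        (fun i => (∑ j ∈ s, g j * (y j - p)) / (#s * B) * g i + p) := by
  set A := ∑ i ∈ s, g i * (y i - p)
  have hN : (0 : ℝ) < #s := by exact_mod_cast hs.card_pos
  have hG : ∑ i ∈ s, g i ^ 2 ≤ #s * B := by
    simpa using sum_le_sum hg
  rw [squaredLossRegret_mul_add, div_le_iff₀ hN]
  have hquad : A ^ 2 / (#s * B) ^ 2 * ∑ i ∈ s, g i ^ 2 ≤ A ^ 2 / (#s * B) ^ 2 * (#s * B) :=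
    mul_le_mul_of_nonneg_left hG (by positivity)
  field_simp at hquad ⊢
  nlinarith

lemma sq_sum_div_card_le_mul_squaredLossRegret_mean {g : ι → ℝ} {B : ℝ} (hB : 0 ≤ B)
    (hs : s.Nonempty) (hg : ∀ i ∈ s, g i ^ 2 ≤ B) {p : ℝ}
    (hsign : (∀ i ∈ s, p ≤ y i) ∨ ∀ i ∈ s, y i ≤ p) :
    (∑ i ∈ s, g i * (y i - p)) ^ 2 / #s ≤
      B * squaredLossRegret s y p (fun _ => (∑ i ∈ s, y i) / #s) := by
  have habs : |∑ i ∈ s, g i * (y i - p)| ≤ √B * |∑ i ∈ s, (y i - p)| := by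
    rw [← sum_abs_eq_abs_sum (hsign.imp (fun h i hi => sub_nonneg.2 (h i hi))
      (fun h i hi => sub_nonpos.2 (h i hi)))]
    exact abs_sum_mul_le fun i hi => Real.abs_le_sqrt (hg i hi)
  rw [squaredLossRegret_const_mean hs, mul_div_assoc']
  gcongr
  calc (∑ i ∈ s, g i * (y i - p)) ^ 2 = |∑ i ∈ s, g i * (y i - p)| ^ 2 := (sq_abs _).symm
    _ ≤ (√B * |∑ i ∈ s, (y i - p)|) ^ 2 := by gcongr
    _ = B * (∑ i ∈ s, (y i - p)) ^ 2 := by rw [mul_pow, Real.sq_sqrt hB, sq_abs]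

theorem exists_affine_sq_sum_div_card_le_mul_squaredLossRegret {g : ι → ℝ} {B : ℝ} (hB : 0 < B)
    (hy : ∀ i ∈ s, y i ∈ Set.Icc 0 1) (hg : ∀ i ∈ s, g i ^ 2 ≤ B) (p : ℝ) :
    ∃ c b : ℝ, |c| * √B ≤ 1 ∧ |b| ≤ 1 ∧
      (∑ i ∈ s, g i * (y i - p)) ^ 2 / #s ≤ B * squaredLossRegret s y p (fun i => c * g i + b) := by
  rcases s.eq_empty_or_nonempty with rfl | hs
  · exact ⟨0, 0, by simp, by simp, by simp [squaredLossRegret]⟩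
  have hN : (0 : ℝ) < #s := by exact_mod_cast hs.card_pos
  by_cases hp : p ∈ Set.Icc 0 1
  · refine ⟨_, p, ?_, abs_le.2 ⟨by linarith [hp.1], hp.2⟩,
      sq_sum_div_card_le_mul_squaredLossRegret_linear hB hs hg p⟩
    have hA : |∑ i ∈ s, g i * (y i - p)| ≤ √B * #s := by
      refine (abs_sum_mul_le fun i hi => Real.abs_le_sqrt (hg i hi)).trans ?_
      gcongr
      simpa using sum_le_sum fun i hi => abs_sub_le_of_nonneg_of_le
        (hy i hi).1 (hy i hi).2 hp.1 hp.2
    rw [abs_div, abs_of_pos (by positivity : (0 : ℝ) < #s * B), div_mul_eq_mul_div,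
      div_le_one (by positivity)]
    calc |∑ i ∈ s, g i * (y i - p)| * √B ≤ √B * #s * √B := by gcongr
      _ = #s * B := by rw [mul_right_comm, Real.mul_self_sqrt hB.le, mul_comm]
  · have hsign : (∀ i ∈ s, p ≤ y i) ∨ ∀ i ∈ s, y i ≤ p := by
      rcases not_and_or.1 hp with hp | hp
      · exact .inl fun i hi => by linarith [(hy i hi).1, not_le.1 hp]
      · exact .inr fun i hi => by linarith [(hy i hi).2, not_le.1 hp]
    have hmean : (∑ i ∈ s, y i) / #s ∈ Set.Icc 0 1 :=
      ⟨div_nonneg (sum_nonneg fun i hi => (hy i hi).1) hN.le,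
        (div_le_one hN).2 (by simpa using sum_le_sum fun i hi => (hy i hi).2)⟩
    refine ⟨0, _, by simp, abs_le.2 ⟨by linarith [hmean.1], hmean.2⟩, ?_⟩
    simpa using sq_sum_div_card_le_mul_squaredLossRegret_mean hB.le hs hg hsign

lemma sq_mul_add_le_one_add_sqrt_sq {B c b v : ℝ} (hB : 1 ≤ B) (hc : |c| * √B ≤ 1) (hb : |b| ≤ 1)
    (hv : v ^ 2 ≤ B) : (c * v + b) ^ 2 ≤ (1 + √B) ^ 2 := by
  have hsqrt : 1 ≤ √B := Real.one_le_sqrt.2 hB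
  have habs : |c * v + b| ≤ 1 + √B :=
    calc |c * v + b| ≤ |c| * |v| + |b| := by rw [← abs_mul]; exact abs_add_le _ _
      _ ≤ |c| * √B + 1 := by gcongr; exact Real.abs_le_sqrt hv
      _ ≤ 1 + √B := by linarith
  exact sq_le_sq' (abs_le.1 habs).1 (abs_le.1 habs).2

lemma div_mul_one_div_mul_sq (N T A : ℝ) : N / T * (1 / N * A) ^ 2 = 1 / T * (A ^ 2 / N) := by
  rcases eq_or_ne N 0 with rfl | hN
  · simp
  · field_simp

lemma le_sq_mul_of_le_mul {a r B : ℝ} (ha : 0 ≤ a) (hB : 1 ≤ B) (h : a ≤ B * r) :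
    a ≤ B ^ 2 * r := by
  have hr : 0 ≤ r := nonneg_of_mul_nonneg_right (ha.trans h) (zero_lt_one.trans_le hB)
  nlinarith

end

theorem swap_regret_to_L2_swap_multicalibration_general {ι X : Type*}
    (P : Finset ℝ) (S : ℝ → Finset ι)
    (x : ι → X) (y : ι → ℝ) (hy : ∀ t, y t = 0 ∨ y t = 1)
    (T : ℝ) (hT : T = ∑ p ∈ P, ((S p).card : ℝ))
    (F : Set (X → ℝ)) (haffine : ∀ f ∈ F, ∀ a b : ℝ, (fun z => a * f z + b) ∈ F)
    (B α : ℝ) (hB : 1 ≤ B)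
    (hswap : ∀ f' : ℝ → X → ℝ,
      (∀ p ∈ P, f' p ∈ F ∧ ∀ z, (f' p z) ^ 2 ≤ (1 + Real.sqrt B) ^ 2) →
      (1 / T) * ∑ p ∈ P, ∑ t ∈ S p, ((p - y t) ^ 2 - (f' p (x t) - y t) ^ 2) ≤ α / B ^ 2) :
    ∀ f : ℝ → X → ℝ, (∀ p ∈ P, f p ∈ F ∧ ∀ z, (f p z) ^ 2 ≤ B) →
      ∑ p ∈ P, (((S p).card : ℝ) / T) *
        ((1 / ((S p).card : ℝ)) * ∑ t ∈ S p, f p (x t) * (y t - p)) ^ 2 ≤ α := by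
  intro f hf
  have hgain : ∀ p ∈ P, ∃ c b : ℝ, |c| * √B ≤ 1 ∧ |b| ≤ 1 ∧
      (∑ t ∈ S p, f p (x t) * (y t - p)) ^ 2 / #(S p) ≤
        B ^ 2 * squaredLossRegret (S p) y p (fun t => c * f p (x t) + b) := fun p hp => by
    obtain ⟨c, b, hc, hb, hgain⟩ := exists_affine_sq_sum_div_card_le_mul_squaredLossRegret (y := y)
      (zero_lt_one.trans_le hB) (fun t _ => by rcases hy t with h | h <;> simp [h])
      (fun t _ => (hf p hp).2 (x t)) p
    exact ⟨c, b, hc, hb, le_sq_mul_of_le_mul (by positivity) hB hgain⟩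
  choose! c b hc hb hgain using hgain
  have hregret := hswap (fun p z => c p * f p z + b p) fun p hp =>
    ⟨haffine _ (hf p hp).1 _ _,
      fun z => sq_mul_add_le_one_add_sqrt_sq hB (hc p hp) (hb p hp) ((hf p hp).2 z)⟩
  have hT0 : 0 ≤ 1 / T := one_div_nonneg.2 (hT ▸ by positivity)
  calc _ = ∑ p ∈ P, 1 / T * ((∑ t ∈ S p, f p (x t) * (y t - p)) ^ 2 / #(S p)) :=
        sum_congr rfl fun p _ => div_mul_one_div_mul_sq _ _ _
    _ ≤ ∑ p ∈ P, 1 / T * (B ^ 2 * squaredLossRegret (S p) y p (fun t => c p * f p (x t) + b p)) :=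
        sum_le_sum fun p hp => mul_le_mul_of_nonneg_left (hgain p hp) hT0
    _ = B ^ 2 * (1 / T * ∑ p ∈ P, ∑ t ∈ S p,
          ((p - y t) ^ 2 - (c p * f p (x t) + b p - y t) ^ 2)) := by
        simp only [squaredLossRegret, ← mul_sum]
        ring
    _ ≤ B ^ 2 * (α / B ^ 2) := by gcongr
    _ = α := by field_simp

/-- If contextual swap regret against all families bounded by `(1+√B)²` in a class `F`
closed under affine transformations is at most `α/B²`, then the L2-swap-multicalibration
error against all families bounded by `B` is at most `α`. -/
theorem swap_regret_to_L2_swap_multicalibration {ι X : Type*}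
    (P : Finset ℝ) (S : ℝ → Finset ι)
    (x : ι → X) (y : ι → ℝ) (hy : ∀ t, y t = 0 ∨ y t = 1)
    (T : ℝ) (hT : T = ∑ p ∈ P, ((S p).card : ℝ)) (hTpos : 0 < T)
    (F : Set (X → ℝ)) (haffine : ∀ f ∈ F, ∀ a b : ℝ, (fun z => a * f z + b) ∈ F)
    (B α : ℝ) (hB : 1 ≤ B)
    (hswap : ∀ f' : ℝ → X → ℝ,
      (∀ p ∈ P, f' p ∈ F ∧ ∀ z, (f' p z) ^ 2 ≤ (1 + Real.sqrt B) ^ 2) →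
      (1 / T) * ∑ p ∈ P, ∑ t ∈ S p, ((p - y t) ^ 2 - (f' p (x t) - y t) ^ 2) ≤ α / B ^ 2) :
    ∀ f : ℝ → X → ℝ, (∀ p ∈ P, f p ∈ F ∧ ∀ z, (f p z) ^ 2 ≤ B) →
      ∑ p ∈ P, (((S p).card : ℝ) / T) *
        ((1 / ((S p).card : ℝ)) * ∑ t ∈ S p, f p (x t) * (y t - p)) ^ 2 ≤ α :=
  swap_regret_to_L2_swap_multicalibration_general P S x y hy T hT F haffine B α hB hswap
end

section
/- Let m' > m ≥ 1 be integers, v ∈ [0,1], and suppose v ∈ (i/m, (i+1)/m]. Let v' be the element of {0, 1/m', ..., 1} lying in (i/m, (i+1)/m] that is closest to v. Then for every p̂ ∈ {0, 1/m, ..., 1} and y ∈ {0,1}, |ℓ_v(y, p̂) − ℓ_{v'}(y, p̂)| ≤ 1/m', where ℓ_v(y, q) = (v − y)·sign(q − v). -/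
noncomputable def sgn (x : ℝ) : ℝ := if 0 ≤ x then 1 else -1

/-- The loss `ℓ_v(y, q) = (v - y) · sign(q - v)`. -/
noncomputable def lossV (v y q : ℝ) : ℝ := (v - y) * sgn (q - v)

/-!
A grid forecast `p̂ = k/m` never lies strictly inside the cell `(i/m, (i+1)/m]` containing `v`
and `v'`, so `sign(p̂ - v) = sign(p̂ - v')` and the two losses differ by exactly `|v - v'|`.
This is at most `1/m'`: if `v'` were farther from `v`, its neighbour on the `1/m'`-grid on the
side of `v` would still lie in the cell and be strictly closer to `v`.
-/

open Set

theorem abs_sgn (x : ℝ) : |sgn x| = 1 := by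
  unfold sgn
  split_ifs <;> simp

theorem sgn_sub_eq_of_mem_Ioc {a b q v v' : ℝ} (hq : q ≤ a ∨ b ≤ q)
    (hv : v ∈ Ioc a b) (hv' : v' ∈ Ioc a b) : sgn (q - v) = sgn (q - v') := by
  unfold sgn
  rcases hq with hq | hq
  · rw [if_neg (by linarith [hv.1]), if_neg (by linarith [hv'.1])]
  · rw [if_pos (by linarith [hv.2]), if_pos (by linarith [hv'.2])]

theorem natCast_div_le_or_le (k i m : ℕ) :
    (k : ℝ) / m ≤ i / m ∨ ((i : ℝ) + 1) / m ≤ k / m := by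
  rcases le_or_gt k i with h | h
  · exact .inl (by gcongr)
  · exact .inr (by gcongr; exact_mod_cast h)

theorem lossV_sub_lossV_of_sgn_eq {v v' y q : ℝ} (h : sgn (q - v) = sgn (q - v')) :
    lossV v y q - lossV v' y q = (v - v') * sgn (q - v) := by
  unfold lossV
  rw [← h]
  ring

section ClosestGridPoint

variable {m' j : ℕ} {a b v : ℝ}

theorem sub_natCast_div_le_of_closest (hm' : 0 < m') (hv1 : v ≤ 1) (hvb : v ≤ b)
    (hja : a < (j : ℝ) / m')
    (hclosest : ∀ j' : ℕ, j' ≤ m' → (j' : ℝ) / m' ∈ Ioc a b →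
      |v - (j : ℝ) / m'| ≤ |v - (j' : ℝ) / m'|) :
    v - (j : ℝ) / m' ≤ 1 / m' := by
  by_contra! hfar
  have hm'R : (0 : ℝ) < m' := by exact_mod_cast hm'
  have hstep : (0 : ℝ) < 1 / m' := one_div_pos.2 hm'R
  have hnext : ((j + 1 : ℕ) : ℝ) / m' = j / m' + 1 / m' := by push_cast; ring
  have hnext_lt : ((j + 1 : ℕ) : ℝ) / m' < v := by linarith
  have hj : j + 1 ≤ m' := by
    have : ((j + 1 : ℕ) : ℝ) < m' := (div_lt_one hm'R).1 (hnext_lt.trans_le hv1)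
    exact_mod_cast this.le
  have hcloser := hclosest (j + 1) hj ⟨by linarith, by linarith⟩
  rw [abs_of_pos (by linarith), abs_of_pos (by linarith)] at hcloser
  linarith

theorem natCast_div_sub_le_of_closest (hm' : 0 < m') (hjm : j ≤ m') (hv0 : 0 ≤ v) (hav : a < v)
    (hjb : (j : ℝ) / m' ≤ b)
    (hclosest : ∀ j' : ℕ, j' ≤ m' → (j' : ℝ) / m' ∈ Ioc a b →
      |v - (j : ℝ) / m'| ≤ |v - (j' : ℝ) / m'|) :
    (j : ℝ) / m' - v ≤ 1 / m' := by
  by_contra! hfar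
  have hm'R : (0 : ℝ) < m' := by exact_mod_cast hm'
  have hstep : (0 : ℝ) < 1 / m' := one_div_pos.2 hm'R
  obtain ⟨j₀, rfl⟩ : ∃ j₀, j = j₀ + 1 := by
    refine Nat.exists_eq_succ_of_ne_zero ?_
    rintro rfl
    simp only [CharP.cast_eq_zero, zero_div] at hfar
    linarith
  have hprev : ((j₀ + 1 : ℕ) : ℝ) / m' = j₀ / m' + 1 / m' := by push_cast; ring
  have hcloser := hclosest j₀ (by omega) ⟨by linarith, by linarith⟩
  rw [abs_of_neg (by linarith), abs_of_neg (by linarith)] at hcloser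
  linarith

theorem abs_sub_natCast_div_le_of_closest (hm' : 0 < m') (hjm : j ≤ m')
    (hv : v ∈ Icc (0 : ℝ) 1) (hvI : v ∈ Ioc a b) (hjI : (j : ℝ) / m' ∈ Ioc a b)
    (hclosest : ∀ j' : ℕ, j' ≤ m' → (j' : ℝ) / m' ∈ Ioc a b →
      |v - (j : ℝ) / m'| ≤ |v - (j' : ℝ) / m'|) :
    |v - (j : ℝ) / m'| ≤ 1 / m' :=
  abs_sub_le_iff.2
    ⟨sub_natCast_div_le_of_closest hm' hv.2 hvI.2 hjI.1 hclosest,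
      natCast_div_sub_le_of_closest hm' hjm hv.1 hvI.1 hjI.2 hclosest⟩

end ClosestGridPoint

theorem lossV_discretization_general (m m' : ℕ) (v v' : ℝ) (i : ℕ)
    (hv : v ∈ Set.Icc (0:ℝ) 1)
    (hvI : v ∈ Set.Ioc ((i : ℝ) / m) (((i : ℝ) + 1) / m))
    (hv'grid : ∃ j : ℕ, j ≤ m' ∧ v' = (j : ℝ) / m')
    (hv'I : v' ∈ Set.Ioc ((i : ℝ) / m) (((i : ℝ) + 1) / m))
    (hclosest : ∀ j : ℕ, j ≤ m' → (j : ℝ) / m' ∈ Set.Ioc ((i : ℝ) / m) (((i : ℝ) + 1) / m) →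
      |v - v'| ≤ |v - (j : ℝ) / m'|) :
    ∀ k : ℕ, k ≤ m → ∀ y : ℝ, (y = 0 ∨ y = 1) →
      |lossV v y ((k : ℝ) / m) - lossV v' y ((k : ℝ) / m)| ≤ 1 / m' := by
  intro k _ y _
  obtain ⟨j, hjm, rfl⟩ := hv'grid
  have hm' : 0 < m' := by
    have hpos : (0 : ℝ) < j / m' := (by positivity : (0 : ℝ) ≤ i / m).trans_lt hv'I.1
    by_contra! h
    simp [Nat.le_zero.mp h] at hpos
  have hsgn := sgn_sub_eq_of_mem_Ioc (natCast_div_le_or_le k i m) hvI hv'I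
  rw [lossV_sub_lossV_of_sgn_eq hsgn, abs_mul, abs_sgn, mul_one]
  exact abs_sub_natCast_div_le_of_closest hm' hjm hv hvI hv'I hclosest

/-- If `v ∈ (i/m, (i+1)/m]` and `v'` is the closest point of the `1/m'`-grid lying in the same
interval, then `|ℓ_v(y,p̂) − ℓ_{v'}(y,p̂)| ≤ 1/m'` for every grid forecast `p̂` and `y ∈ {0,1}`. -/
theorem lossV_discretization (m m' : ℕ) (hm : 1 ≤ m) (hmm : m < m') (v v' : ℝ) (i : ℕ)
    (hv : v ∈ Set.Icc (0:ℝ) 1)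
    (hvI : v ∈ Set.Ioc ((i : ℝ) / m) (((i : ℝ) + 1) / m))
    (hv'grid : ∃ j : ℕ, j ≤ m' ∧ v' = (j : ℝ) / m')
    (hv'I : v' ∈ Set.Ioc ((i : ℝ) / m) (((i : ℝ) + 1) / m))
    (hclosest : ∀ j : ℕ, j ≤ m' → (j : ℝ) / m' ∈ Set.Ioc ((i : ℝ) / m) (((i : ℝ) + 1) / m) →
      |v - v'| ≤ |v - (j : ℝ) / m'|) :
    ∀ k : ℕ, k ≤ m → ∀ y : ℝ, (y = 0 ∨ y = 1) →
      |lossV v y ((k : ℝ) / m) - lossV v' y ((k : ℝ) / m)| ≤ 1 / m' :=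
  lossV_discretization_general m m' v v' i hv hvI hv'grid hv'I hclosest
end

section
/- Let z be a distribution on {0,1} with mean μ = E_{y∼z}[y], let m ≥ 1, and let p̂ be the multiple of 1/m closest to μ. Then for every v ∈ [0,1] and every a ∈ [0,1]: E_{y∼z}[ℓ_v(y, p̂) − ℓ_v(y, a)] ≤ 2/m, where ℓ_v(y, q) = (v − y)·sign(q − v). -/
lemma sgn_mem (x : ℝ) : sgn x = 1 ∨ sgn x = -1 := by
  unfold sgn; split <;> simp

/-- If `p̂` is the multiple of `1/m` closest to the mean `μ` of a Bernoulli distribution,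
then for every `v, a ∈ [0,1]` the expected excess `ℓ_v`-loss of `p̂` over `a` is at most `2/m`. -/
theorem lossV_rounded_mean_near_optimal (μ : ℝ) (hμ : μ ∈ Set.Icc (0:ℝ) 1)
    (m : ℕ) (hm : 1 ≤ m)
    (phat : ℝ) (hgrid : ∃ k : ℕ, k ≤ m ∧ phat = (k : ℝ) / m)
    (hclosest : ∀ j : ℕ, j ≤ m → |μ - phat| ≤ |μ - (j : ℝ) / m|) :
    ∀ v ∈ Set.Icc (0:ℝ) 1, ∀ a ∈ Set.Icc (0:ℝ) 1,
      (1 - μ) * (lossV v 0 phat - lossV v 0 a) + μ * (lossV v 1 phat - lossV v 1 a) ≤ 2 / m := by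
  obtain ⟨hμ0, hμ1⟩ := hμ
  have hmR : (1:ℝ) ≤ (m:ℝ) := by exact_mod_cast hm
  have hmpos : (0:ℝ) < m := by linarith
  have hinv : (1 / (m:ℝ)) * m = 1 := by field_simp
  have hnear : |μ - phat| ≤ 1 / m := by
    set j := ⌊μ * m⌋₊ with hjdef
    have hjle : j ≤ m := by
      apply Nat.floor_le_of_le
      nlinarith
    have h1 : (j : ℝ) ≤ μ * m := Nat.floor_le (by positivity)
    have h2 : μ * m < (j:ℝ) + 1 := Nat.lt_floor_add_one _
    have hj' : ((j:ℝ) / m) * m = j := by field_simp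
    have habs : |μ - (j:ℝ)/m| ≤ 1/m := by
      rw [abs_le]
      constructor <;> nlinarith
    exact (hclosest j hjle).trans habs
  have hnear' := abs_le.mp hnear
  have h2m : (0:ℝ) < 2 / m := by positivity
  have h2m' : 2 / (m:ℝ) = 2 * (1 / m) := by ring
  intro v hv a ha
  obtain ⟨hv0, hv1⟩ := hv
  have key : (1 - μ) * (lossV v 0 phat - lossV v 0 a) + μ * (lossV v 1 phat - lossV v 1 a)
      = (v - μ) * (sgn (phat - v) - sgn (a - v)) := by
    simp only [lossV]; ring
  rw [key]
  have hs2 := sgn_mem (a - v)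
  rcases le_or_gt v μ with hvμ | hvμ
  · by_cases hpv : 0 ≤ phat - v
    · have hs1 : sgn (phat - v) = 1 := if_pos hpv
      rcases hs2 with h | h <;> rw [hs1, h] <;> linarith [hnear'.1, hnear'.2]
    · have hs1 : sgn (phat - v) = -1 := if_neg hpv
      have hpv' : phat < v := by linarith [not_le.mp hpv]
      have hsmall : μ - v ≤ 1 / m := by nlinarith
      rcases hs2 with h | h <;> rw [hs1, h] <;> linarith [hnear'.1, hnear'.2]
  · by_cases hpv : 0 ≤ phat - v
    · have hs1 : sgn (phat - v) = 1 := if_pos hpv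
      have hsmall : v - μ ≤ 1 / m := by nlinarith
      rcases hs2 with h | h <;> rw [hs1, h] <;> linarith [hnear'.1, hnear'.2]
    · have hs1 : sgn (phat - v) = -1 := if_neg hpv
      have hpv' : phat < v := by linarith [not_le.mp hpv]
      rcases hs2 with h | h <;> rw [hs1, h] <;> linarith [hnear'.1, hnear'.2]
end

section
/- Fix a transcript with forecasts p ∈ P, level sets S(p) of sizes n(p), labels y_t ∈ {0,1}, and T = Σ_p n(p). Let ℓ : {0,1} × [0,1] → ℝ≥0 be convex in its second argument with derivative bounded by D and with C = max_a |ℓ(0,a) − ℓ(1,a)|. If the L1-swap-multicalibration error (sup over admissible families {f_p}, including the constant-1 function, of Σ_p (n(p)/T)|(1/n(p))Σ_{t∈S(p)} f_p(x_t)(y_t − p)|) is at most α, then the swap omniprediction regret Σ_p (n(p)/T)[(1/n(p))Σ_{t∈S(p)} ℓ(y_t, k^ℓ(p)) − (1/n(p))Σ_{t∈S(p)} ℓ(y_t, f_p(x_t))] is at most (C + 4D)·α for every admissible family {f_p} with f_p(x_t) ∈ [0,1]. -/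
/-!
For a binary label, `ℓ y a = L_p a + (y - p) * g a`, where `L_p a = (1 - p) ℓ 0 a + p ℓ 1 a` is the
loss expected under the forecast `p` and `g a = ℓ 1 a - ℓ 0 a`. On the level set of `p`, the
`L_p`-part of the regret of `k p` against `f p` is nonpositive: by Jensen, the average of `L_p`
along `f p` is at least `L_p` at the mean, and `k p` minimises `L_p`. What is left is the
calibration bias of the test family `g (k p) - g (f p ·)`, which is bounded by `2D` since `ℓ 0`
and `ℓ 1` are `D`-Lipschitz on `[0,1]`. Its positive and negative parts, divided by `2D`, are
`[0,1]`-valued, so the multicalibration guarantee bounds the regret by `2 (2D) α ≤ (C + 4D) α`.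
-/

open Set

theorem ConvexOn.card_mul_le_sum_of_isMinOn {ι E : Type*} [AddCommGroup E] [Module ℝ E]
    {K : Set E} {L : E → ℝ} (hL : ConvexOn ℝ K L) {k : E} (hk : IsMinOn L K k)
    (s : Finset ι) {F : ι → E} (hF : ∀ t ∈ s, F t ∈ K) :
    (s.card : ℝ) * L k ≤ ∑ t ∈ s, L (F t) := by
  rcases s.eq_empty_or_nonempty with rfl | hs
  · simp
  have hw : 0 < ∑ _t ∈ s, (1 : ℝ) := by simpa using hs.card_pos
  have hmean := hL.1.centerMass_mem (fun _ _ => zero_le_one) hw hF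
  have hjensen := (isMinOn_iff.mp hk _ hmean).trans
    (hL.map_centerMass_le (fun _ _ => zero_le_one) hw hF)
  simp only [Finset.centerMass, Finset.sum_const, nsmul_eq_mul, mul_one, one_mul,
    Function.comp_apply, smul_eq_mul] at hjensen
  rwa [le_inv_mul_iff₀ (by simpa using hs.card_pos)] at hjensen

lemma abs_sub_sub_sub_le {K : Set ℝ} {φ ψ : ℝ → ℝ} {D : ℝ}
    (hφ : ∀ a ∈ K, ∀ b ∈ K, |φ a - φ b| ≤ D * |a - b|)
    (hψ : ∀ a ∈ K, ∀ b ∈ K, |ψ a - ψ b| ≤ D * |a - b|) {a b : ℝ} (ha : a ∈ K) (hb : b ∈ K) :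
    |(φ a - ψ a) - (φ b - ψ b)| ≤ 2 * D * |a - b| := by
  calc |(φ a - ψ a) - (φ b - ψ b)| = |(φ a - φ b) - (ψ a - ψ b)| := by ring_nf
    _ ≤ |φ a - φ b| + |ψ a - ψ b| := abs_sub _ _
    _ ≤ 2 * D * |a - b| := by linarith [hφ a ha b hb, hψ a ha b hb]

lemma posPart_div_mem_Icc {a c : ℝ} (h : |a| ≤ c) : a⁺ / c ∈ Icc (0 : ℝ) 1 := by
  have hc : 0 ≤ c := (abs_nonneg a).trans h
  have hpos : a⁺ ≤ |a| := by rw [← posPart_add_negPart]; linarith [negPart_nonneg a]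
  exact ⟨div_nonneg (posPart_nonneg a) hc, div_le_one_of_le₀ (hpos.trans h) hc⟩

lemma eq_mul_posPart_div_sub_negPart_div {a c : ℝ} (h : |a| ≤ c) :
    a = c * (a⁺ / c - a⁻ / c) := by
  rcases (abs_nonneg a).trans h |>.eq_or_lt with hc | hc
  · subst hc
    simpa using h
  · rw [← sub_div, posPart_sub_negPart, mul_div_cancel₀ _ hc.ne']

section Loss

variable (ℓ : ℝ → ℝ → ℝ)

def expectedLoss (p a : ℝ) : ℝ := (1 - p) * ℓ 0 a + p * ℓ 1 a

lemma loss_eq_expectedLoss_add {y : ℝ} (hy : y = 0 ∨ y = 1) (p a : ℝ) :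
    ℓ y a = expectedLoss ℓ p a + (y - p) * (ℓ 1 a - ℓ 0 a) := by
  rcases hy with rfl | rfl <;> simp only [expectedLoss] <;> ring

variable {ℓ}

lemma convexOn_expectedLoss {K : Set ℝ} (h0 : ConvexOn ℝ K (ℓ 0)) (h1 : ConvexOn ℝ K (ℓ 1))
    {p : ℝ} (hp : p ∈ Icc (0 : ℝ) 1) : ConvexOn ℝ K (expectedLoss ℓ p) :=
  (h0.smul (sub_nonneg.mpr hp.2)).add (h1.smul hp.1)

lemma average_loss_sub_le {ι : Type*} (s : Finset ι) {y : ι → ℝ}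
    (hy : ∀ t ∈ s, y t = 0 ∨ y t = 1) {p k : ℝ}
    (hL : ConvexOn ℝ (Icc 0 1) (expectedLoss ℓ p)) (hk : IsMinOn (expectedLoss ℓ p) (Icc 0 1) k)
    {F : ι → ℝ} (hF : ∀ t ∈ s, F t ∈ Icc (0 : ℝ) 1) :
    (1 / (s.card : ℝ)) * ∑ t ∈ s, ℓ (y t) k - (1 / (s.card : ℝ)) * ∑ t ∈ s, ℓ (y t) (F t) ≤
      (1 / (s.card : ℝ)) *
        ∑ t ∈ s, ((ℓ 1 k - ℓ 0 k) - (ℓ 1 (F t) - ℓ 0 (F t))) * (y t - p) := by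
  have hsplit : ∀ t ∈ s, ℓ (y t) k - ℓ (y t) (F t) = (expectedLoss ℓ p k - expectedLoss ℓ p (F t))
      + ((ℓ 1 k - ℓ 0 k) - (ℓ 1 (F t) - ℓ 0 (F t))) * (y t - p) := fun t ht => by
    rw [loss_eq_expectedLoss_add ℓ (hy t ht) p k, loss_eq_expectedLoss_add ℓ (hy t ht) p (F t)]
    ring
  have hjensen : ∑ t ∈ s, (expectedLoss ℓ p k - expectedLoss ℓ p (F t)) ≤ 0 := by
    rw [Finset.sum_sub_distrib, Finset.sum_const, nsmul_eq_mul, sub_nonpos]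
    exact hL.card_mul_le_sum_of_isMinOn hk s hF
  rw [← mul_sub, ← Finset.sum_sub_distrib, Finset.sum_congr rfl hsplit, Finset.sum_add_distrib,
    mul_add, add_le_iff_nonpos_left]
  exact mul_nonpos_of_nonneg_of_nonpos (by positivity) hjensen

end Loss

section Multicalibration

variable {ι X : Type*} (P : Finset ℝ) (S : ℝ → Finset ι) (x : ι → X) (y : ι → ℝ) (T : ℝ)

noncomputable def calibrationBias (h : ℝ → X → ℝ) (p : ℝ) : ℝ :=
  (1 / ((S p).card : ℝ)) * ∑ t ∈ S p, h p (x t) * (y t - p)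

noncomputable def l1SwapMulticalibrationError (h : ℝ → X → ℝ) : ℝ :=
  ∑ p ∈ P, (((S p).card : ℝ) / T) * |calibrationBias S x y h p|

variable {P S x y T}

lemma l1SwapMulticalibrationError_congr {h g : ℝ → X → ℝ}
    (hg : ∀ p ∈ P, ∀ t ∈ S p, h p (x t) = g p (x t)) :
    l1SwapMulticalibrationError P S x y T h = l1SwapMulticalibrationError P S x y T g := by
  refine Finset.sum_congr rfl fun p hp => ?_
  simp only [calibrationBias, Finset.sum_congr rfl fun t ht => congrArg (· * (y t - p)) (hg p hp t ht)]

variable {α : ℝ}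

/-- Clamping `f` to `[0,1]` does not change it on the transcript. -/
lemma l1SwapMulticalibrationError_le_of_mem_Icc
    (hmc : ∀ f : ℝ → X → ℝ, (∀ p z, f p z ∈ Icc (0 : ℝ) 1) →
      l1SwapMulticalibrationError P S x y T f ≤ α)
    {f : ℝ → X → ℝ} (hf : ∀ p ∈ P, ∀ t ∈ S p, f p (x t) ∈ Icc (0 : ℝ) 1) :
    l1SwapMulticalibrationError P S x y T f ≤ α := by
  rw [l1SwapMulticalibrationError_congr
    (g := fun p z => (projIcc 0 1 zero_le_one (f p z) : ℝ)) fun p hp t ht => by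
      rw [projIcc_of_mem _ (hf p hp t ht)]]
  exact hmc _ fun p z => (projIcc 0 1 zero_le_one (f p z)).2

/-- A family bounded by `c` is `c` times the difference of two `[0,1]`-valued families. -/
lemma l1SwapMulticalibrationError_le_of_abs_le
    (hmc : ∀ f : ℝ → X → ℝ, (∀ p z, f p z ∈ Icc (0 : ℝ) 1) →
      l1SwapMulticalibrationError P S x y T f ≤ α)
    (hT : 0 ≤ T) {h : ℝ → X → ℝ} {c : ℝ} (hc : 0 ≤ c)
    (hh : ∀ p ∈ P, ∀ t ∈ S p, |h p (x t)| ≤ c) :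
    l1SwapMulticalibrationError P S x y T h ≤ 2 * c * α := by
  set u : ℝ → X → ℝ := fun p z => (h p z)⁺ / c
  set v : ℝ → X → ℝ := fun p z => (h p z)⁻ / c
  have hu : l1SwapMulticalibrationError P S x y T u ≤ α :=
    l1SwapMulticalibrationError_le_of_mem_Icc hmc fun p hp t ht =>
      posPart_div_mem_Icc (hh p hp t ht)
  have hv : l1SwapMulticalibrationError P S x y T v ≤ α :=
    l1SwapMulticalibrationError_le_of_mem_Icc hmc fun p hp t ht =>
      posPart_div_mem_Icc ((abs_neg (h p (x t))).trans_le (hh p hp t ht))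
  have hbias : ∀ p ∈ P, calibrationBias S x y h p =
      c * (calibrationBias S x y u p - calibrationBias S x y v p) := fun p hp => by
    rw [calibrationBias, calibrationBias, calibrationBias, ← mul_sub, ← Finset.sum_sub_distrib,
      mul_left_comm]
    congr 1
    rw [Finset.mul_sum]
    refine Finset.sum_congr rfl fun t ht => ?_
    linear_combination (y t - p) * eq_mul_posPart_div_sub_negPart_div (hh p hp t ht)
  calc l1SwapMulticalibrationError P S x y T h
      ≤ ∑ p ∈ P, (((S p).card : ℝ) / T) *
          (c * |calibrationBias S x y u p| + c * |calibrationBias S x y v p|) := by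
        refine Finset.sum_le_sum fun p hp => mul_le_mul_of_nonneg_left ?_ (by positivity)
        rw [hbias p hp, abs_mul, abs_of_nonneg hc, ← mul_add]
        exact mul_le_mul_of_nonneg_left (abs_sub _ _) hc
    _ = c * l1SwapMulticalibrationError P S x y T u + c * l1SwapMulticalibrationError P S x y T v := by
        simp only [l1SwapMulticalibrationError, Finset.mul_sum, ← Finset.sum_add_distrib]
        refine Finset.sum_congr rfl fun p _ => ?_
        ring
    _ ≤ 2 * c * α := by nlinarith

end Multicalibration

theorem L1_swap_multicalibration_to_swap_omniprediction_general {ι X : Type*}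
    (P : Finset ℝ) (hP : ∀ p ∈ P, p ∈ Set.Icc (0:ℝ) 1)
    (S : ℝ → Finset ι)
    (x : ι → X) (y : ι → ℝ) (hy : ∀ t, y t = 0 ∨ y t = 1)
    (T : ℝ) (hTpos : 0 < T)
    (ℓ : ℝ → ℝ → ℝ)
    (hconv : ∀ yv : ℝ, (yv = 0 ∨ yv = 1) → ConvexOn ℝ (Set.Icc (0:ℝ) 1) (ℓ yv))
    (D : ℝ) (hD : ∀ yv : ℝ, (yv = 0 ∨ yv = 1) → ∀ a ∈ Set.Icc (0:ℝ) 1,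
      ∀ b ∈ Set.Icc (0:ℝ) 1, |ℓ yv a - ℓ yv b| ≤ D * |a - b|)
    (C : ℝ) (hC : ∀ a ∈ Set.Icc (0:ℝ) 1, |ℓ 0 a - ℓ 1 a| ≤ C)
    (k : ℝ → ℝ) (hk : ∀ p ∈ P, k p ∈ Set.Icc (0:ℝ) 1 ∧
      ∀ a ∈ Set.Icc (0:ℝ) 1,
        (1 - p) * ℓ 0 (k p) + p * ℓ 1 (k p) ≤ (1 - p) * ℓ 0 a + p * ℓ 1 a)
    (α : ℝ)
    (hmc : ∀ f : ℝ → X → ℝ, (∀ p z, f p z ∈ Set.Icc (0:ℝ) 1) →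
      ∑ p ∈ P, (((S p).card : ℝ) / T) *
        |(1 / ((S p).card : ℝ)) * ∑ t ∈ S p, f p (x t) * (y t - p)| ≤ α) :
    ∀ f : ℝ → X → ℝ, (∀ p ∈ P, ∀ t ∈ S p, f p (x t) ∈ Set.Icc (0:ℝ) 1) →
      ∑ p ∈ P, (((S p).card : ℝ) / T) *
        ((1 / ((S p).card : ℝ)) * ∑ t ∈ S p, ℓ (y t) (k p) -
          (1 / ((S p).card : ℝ)) * ∑ t ∈ S p, ℓ (y t) (f p (x t))) ≤ (C + 4 * D) * α := by
  intro f hf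
  have h0 : (0 : ℝ) ∈ Icc (0 : ℝ) 1 := left_mem_Icc.mpr zero_le_one
  have h1 : (1 : ℝ) ∈ Icc (0 : ℝ) 1 := right_mem_Icc.mpr zero_le_one
  have hD0 : 0 ≤ D := by simpa using (abs_nonneg _).trans (hD 0 (.inl rfl) 0 h0 1 h1)
  have hC0 : 0 ≤ C := (abs_nonneg _).trans (hC 0 h0)
  have hα : 0 ≤ α := by simpa using hmc 0 fun _ _ => h0
  set H : ℝ → X → ℝ := fun p z => (ℓ 1 (k p) - ℓ 0 (k p)) - (ℓ 1 (f p z) - ℓ 0 (f p z))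
  have hH : ∀ p ∈ P, ∀ t ∈ S p, |H p (x t)| ≤ 2 * D := fun p hp t ht =>
    (abs_sub_sub_sub_le (hD 1 (.inr rfl)) (hD 0 (.inl rfl)) (hk p hp).1 (hf p hp t ht)).trans
      (mul_le_of_le_one_right (by positivity)
        (abs_sub_le_of_nonneg_of_le (hk p hp).1.1 (hk p hp).1.2 (hf p hp t ht).1 (hf p hp t ht).2))
  have hregret : ∀ p ∈ P, (1 / ((S p).card : ℝ)) * ∑ t ∈ S p, ℓ (y t) (k p) -
      (1 / ((S p).card : ℝ)) * ∑ t ∈ S p, ℓ (y t) (f p (x t)) ≤ calibrationBias S x y H p :=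
    fun p hp => average_loss_sub_le (S p) (fun t _ => hy t)
      (convexOn_expectedLoss (hconv 0 (.inl rfl)) (hconv 1 (.inr rfl)) (hP p hp))
      (isMinOn_iff.mpr (hk p hp).2) (hf p hp)
  calc _ ≤ l1SwapMulticalibrationError P S x y T H :=
        Finset.sum_le_sum fun p hp => mul_le_mul_of_nonneg_left
          ((hregret p hp).trans (le_abs_self _)) (by positivity)
    _ ≤ 2 * (2 * D) * α := l1SwapMulticalibrationError_le_of_abs_le hmc hTpos.le (by positivity) hH
    _ ≤ (C + 4 * D) * α := by nlinarith

/-- If the L1-swap-multicalibration error over all `[0,1]`-valued families (including the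
constant-1 function) is at most `α`, then the swap omniprediction regret for any convex,
`D`-Lipschitz loss `ℓ` with scale `C` against any `[0,1]`-valued family is at most `(C+4D)α`. -/
theorem L1_swap_multicalibration_to_swap_omniprediction {ι X : Type*}
    (P : Finset ℝ) (hP : ∀ p ∈ P, p ∈ Set.Icc (0:ℝ) 1)
    (S : ℝ → Finset ι)
    (x : ι → X) (y : ι → ℝ) (hy : ∀ t, y t = 0 ∨ y t = 1)
    (T : ℝ) (hT : T = ∑ p ∈ P, ((S p).card : ℝ)) (hTpos : 0 < T)
    (ℓ : ℝ → ℝ → ℝ) (hℓ0 : ∀ yv a, 0 ≤ ℓ yv a)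
    (hconv : ∀ yv : ℝ, (yv = 0 ∨ yv = 1) → ConvexOn ℝ (Set.Icc (0:ℝ) 1) (ℓ yv))
    (D : ℝ) (hD : ∀ yv : ℝ, (yv = 0 ∨ yv = 1) → ∀ a ∈ Set.Icc (0:ℝ) 1,
      ∀ b ∈ Set.Icc (0:ℝ) 1, |ℓ yv a - ℓ yv b| ≤ D * |a - b|)
    (C : ℝ) (hC : ∀ a ∈ Set.Icc (0:ℝ) 1, |ℓ 0 a - ℓ 1 a| ≤ C)
    (k : ℝ → ℝ) (hk : ∀ p ∈ P, k p ∈ Set.Icc (0:ℝ) 1 ∧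
      ∀ a ∈ Set.Icc (0:ℝ) 1,
        (1 - p) * ℓ 0 (k p) + p * ℓ 1 (k p) ≤ (1 - p) * ℓ 0 a + p * ℓ 1 a)
    (α : ℝ)
    (hmc : ∀ f : ℝ → X → ℝ, (∀ p z, f p z ∈ Set.Icc (0:ℝ) 1) →
      ∑ p ∈ P, (((S p).card : ℝ) / T) *
        |(1 / ((S p).card : ℝ)) * ∑ t ∈ S p, f p (x t) * (y t - p)| ≤ α) :
    ∀ f : ℝ → X → ℝ, (∀ p ∈ P, ∀ t ∈ S p, f p (x t) ∈ Set.Icc (0:ℝ) 1) →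
      ∑ p ∈ P, (((S p).card : ℝ) / T) *
        ((1 / ((S p).card : ℝ)) * ∑ t ∈ S p, ℓ (y t) (k p) -
          (1 / ((S p).card : ℝ)) * ∑ t ∈ S p, ℓ (y t) (f p (x t))) ≤ (C + 4 * D) * α :=
  L1_swap_multicalibration_to_swap_omniprediction_general P hP S x y hy T hTpos ℓ hconv D hD C hC k
    hk α hmc
end

section
/- Fix a set S of indices with labels y_t ∈ {0,1} and |S| = n, and a forecast value p̂ ∈ [0,1]. Let the calibration error be E := (1/n)Σ_{t∈S}(y_t − p̂), and take ℓ = Trunc_{p̂ + sign(E)/T} and comparator f ≡ (1 + sign(E))/2 ∈ {0,1}. Then (1/n)Σ_{t∈S} ℓ(y_t, k^ℓ(p̂)) − (1/n)Σ_{t∈S} ℓ(y_t, f) ≥ 2|E| − 2/T, where Trunc_v(y, q) = (v − y)(2q − 1) for v ∈ [0,1] and k^ℓ is the optimal post-processing. -/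
/-- The truncated loss `Trunc_v(y, q) = (v − y)(2q − 1)`. -/
def truncLoss (v y q : ℝ) : ℝ := (v - y) * (2 * q - 1)

/-- With `ℓ = Trunc_{p̂ + sign(E)/T}` and comparator `f = (1+sign(E))/2`, the omniprediction
regret on the level set `S` is at least `2|E| − 2/T`, where `E` is the calibration error.
Here `Trunc_v(y, k^ℓ(p̂)) = (v − y)·sign(p̂ − v)` is the optimally post-processed loss. -/
theorem trunc_regret_lower_bounds_calibration {ι : Type*} (S : Finset ι) (hS : S.Nonempty)
    (y : ι → ℝ) (hy : ∀ t ∈ S, y t = 0 ∨ y t = 1)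
    (phat : ℝ) (hphat : phat ∈ Set.Icc (0:ℝ) 1)
    (T : ℝ) (hT : 0 < T)
    (E : ℝ) (hE : E = (1 / (S.card : ℝ)) * ∑ t ∈ S, (y t - phat))
    (v : ℝ) (hv : v = phat + sgn E / T)
    (f : ℝ) (hf : f = (1 + sgn E) / 2) :
    2 * |E| - 2 / T ≤
      (1 / (S.card : ℝ)) * ∑ t ∈ S, (v - y t) * sgn (phat - v) -
        (1 / (S.card : ℝ)) * ∑ t ∈ S, truncLoss v (y t) f := by
  have hn : (0 : ℝ) < (S.card : ℝ) := by exact_mod_cast Finset.card_pos.mpr hS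
  have hTpos : 0 < 1 / T := by positivity
  have hsum1 : ∑ t ∈ S, (v - y t) = (S.card : ℝ) * v - ∑ t ∈ S, y t := by
    rw [Finset.sum_sub_distrib, Finset.sum_const, nsmul_eq_mul]
  have hsum2 : ∑ t ∈ S, (y t - phat) = (∑ t ∈ S, y t) - (S.card : ℝ) * phat := by
    rw [Finset.sum_sub_distrib, Finset.sum_const, nsmul_eq_mul]
  by_cases hE0 : 0 ≤ E
  · have hs : sgn E = 1 := if_pos hE0
    have hv' : v = phat + 1 / T := by rw [hv, hs]
    have h1 : sgn (phat - v) = -1 := by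
      unfold sgn; rw [if_neg]; rw [hv']; linarith
    have hf' : f = 1 := by rw [hf, hs]; ring
    have habs : |E| = E := abs_of_nonneg hE0
    simp only [truncLoss, h1, hf', habs]
    rw [show ∀ g : ι → ℝ, ∑ t ∈ S, (v - y t) * g t = ∑ t ∈ S, (v - y t) * g t from fun _ => rfl]
    have e1 : ∑ t ∈ S, (v - y t) * (-1 : ℝ) = -((S.card : ℝ) * v - ∑ t ∈ S, y t) := by
      rw [← Finset.sum_mul, hsum1]; ring
    have e2 : ∑ t ∈ S, (v - y t) * (2 * 1 - 1 : ℝ) = (S.card : ℝ) * v - ∑ t ∈ S, y t := by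
      rw [← Finset.sum_mul, hsum1]; ring
    rw [e1, e2, hE, hsum2, hv']
    field_simp
    ring_nf
    nlinarith [hn.le]
  · have hs : sgn E = -1 := if_neg hE0
    have hv' : v = phat - 1 / T := by rw [hv, hs]; ring
    have h1 : sgn (phat - v) = 1 := by
      unfold sgn; rw [if_pos]; rw [hv']; linarith
    have hf' : f = 0 := by rw [hf, hs]; ring
    have habs : |E| = -E := abs_of_neg (lt_of_not_ge hE0)
    simp only [truncLoss, h1, hf', habs]
    have e1 : ∑ t ∈ S, (v - y t) * (1 : ℝ) = (S.card : ℝ) * v - ∑ t ∈ S, y t := by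
      rw [← Finset.sum_mul, hsum1]; ring
    have e2 : ∑ t ∈ S, (v - y t) * (2 * 0 - 1 : ℝ) = -((S.card : ℝ) * v - ∑ t ∈ S, y t) := by
      rw [← Finset.sum_mul, hsum1]; ring
    rw [e1, e2, hE, hsum2, hv']
    field_simp
    ring_nf
    nlinarith [hn.le]
end

section
/- Let H : [0,1] → ℝ be non-increasing and (ρB)-Lipschitz with H(0) ≥ α > 0, ρB > 0, α ∈ [0,1]. Let b = min(1, H^{-1}(α/2)) (where H^{-1}(α/2) is any point with H(H^{-1}(α/2)) = α/2, assumed to exist when H(1) < α/2). Then ∫_0^b H(τ) dτ ≥ α²/max(2, 8ρB). -/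
/-- If `H` is non-increasing, `(ρB)`-Lipschitz on `[0,1]`, with `H(0) ≥ α > 0`, and
`b = min(1, H⁻¹(α/2))` (with `H⁻¹(α/2)` a point `c` with `H(c) = α/2`, existing when
`H(1) < α/2`), then `∫₀^b H ≥ α²/max(2, 8ρB)`. -/
theorem pinball_integral_lower_bound (H : ℝ → ℝ) (ρB α : ℝ)
    (hρB : 0 < ρB) (hα : α ∈ Set.Ioc (0:ℝ) 1)
    (hmono : AntitoneOn H (Set.Icc 0 1))
    (hlip : ∀ a ∈ Set.Icc (0:ℝ) 1, ∀ b' ∈ Set.Icc (0:ℝ) 1, |H a - H b'| ≤ ρB * |a - b'|)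
    (hH0 : α ≤ H 0)
    (c : ℝ) (hc : H 1 < α / 2 → c ∈ Set.Icc (0:ℝ) 1 ∧ H c = α / 2)
    (b : ℝ) (hb : b = if H 1 < α / 2 then min 1 c else 1) :
    α ^ 2 / max 2 (8 * ρB) ≤ ∫ τ in (0:ℝ)..b, H τ := by
  obtain ⟨hα0, hα1⟩ := hα
  by_cases h1 : H 1 < α / 2
  · obtain ⟨hcI, hcval⟩ := hc h1
    have hb' : b = c := by rw [hb, if_pos h1, min_eq_right hcI.2]
    subst hb'
    have hint : IntervalIntegrable H MeasureTheory.volume 0 b := by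
      apply AntitoneOn.intervalIntegrable
      apply hmono.mono
      rw [Set.uIcc_of_le hcI.1]
      exact Set.Icc_subset_Icc le_rfl hcI.2
    have key : b * α / 2 ≤ ∫ τ in (0:ℝ)..b, H τ := by
      have h := intervalIntegral.integral_mono_on hcI.1
        (intervalIntegrable_const (c := α / 2)) hint
        (fun x hx => by
          have : H b ≤ H x :=
            hmono ⟨hx.1, hx.2.trans hcI.2⟩ hcI hx.2
          linarith [hcval ▸ this])
      simpa using h
    have hlipc : |H 0 - H b| ≤ ρB * |0 - b| :=
      hlip 0 ⟨le_rfl, zero_le_one⟩ b hcI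
    have habs : |0 - b| = b := by
      rw [abs_sub_comm, sub_zero, abs_of_nonneg hcI.1]
    have hcb : α / 2 ≤ ρB * b := by
      rw [habs] at hlipc
      have := le_trans (le_abs_self _) hlipc
      rw [hcval] at this
      linarith
    have hmax : (8 : ℝ) * ρB ≤ max 2 (8 * ρB) := le_max_right _ _
    have h8 : α ^ 2 / max 2 (8 * ρB) ≤ α ^ 2 / (8 * ρB) := by
      gcongr
    refine h8.trans (le_trans ?_ key)
    rw [div_le_iff₀ (by positivity)]
    nlinarith [hcI.1, key]
  · have hb' : b = 1 := by rw [hb, if_neg h1]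
    subst hb'
    have hint : IntervalIntegrable H MeasureTheory.volume 0 1 := by
      apply AntitoneOn.intervalIntegrable
      apply hmono.mono
      rw [Set.uIcc_of_le zero_le_one]
    have key : 1 * (α / 2) ≤ ∫ τ in (0:ℝ)..1, H τ := by
      have h := intervalIntegral.integral_mono_on zero_le_one
        (intervalIntegrable_const (c := α / 2)) hint
        (fun x hx => by
          have : H 1 ≤ H x := hmono hx ⟨zero_le_one, le_rfl⟩ hx.2
          linarith [not_lt.mp h1])
      simpa using h
    have hmax : (2 : ℝ) ≤ max 2 (8 * ρB) := le_max_left _ _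
    have h2 : α ^ 2 / max 2 (8 * ρB) ≤ α ^ 2 / 2 := by
      gcongr
    refine h2.trans (le_trans ?_ key)
    nlinarith
end

section
/- Fix a transcript prefix π of length t−1, a new triple (x, y, p̂) with y ∈ {0,1}, and f with f(x)² ≤ B for all x. Let uK₂(π, f) = Σ_p n(π,p)·K(π,p,f)² denote the unnormalized L2-multicalibration error, where K(π,p,f) = (1/n(π,p)) Σ_{τ∈S(π,p)} f(x_τ)(y_τ − p̂_τ) when n(π,p) ≥ 1 and 0 otherwise. If n(π, p̂) ≥ 1, then uK₂(π ∘ (x,y,p̂), f) − uK₂(π, f) ≤ B/n(π, p̂) + 2·f(x)·(y − p̂)·K(π, p̂, f). If n(π, p̂) = 0, the increase is at most B. -/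
/-- Number of rounds in `A` on which forecast `p` was made. -/
noncomputable def nC {ι : Type*} (A : Finset ι) (phat : ι → ℝ) (p : ℝ) : ℕ :=
  (A.filter (fun t => phat t = p)).card

/-- Calibration error of forecast `p` on the transcript `A` with respect to `f`
(`0` if `p` never occurs). -/
noncomputable def Kerr {ι X : Type*} (A : Finset ι) (phat : ι → ℝ) (x : ι → X) (y : ι → ℝ)
    (f : X → ℝ) (p : ℝ) : ℝ :=
  if 1 ≤ nC A phat p then
    (1 / (nC A phat p : ℝ)) * ∑ t ∈ A.filter (fun t => phat t = p), f (x t) * (y t - phat t)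
  else 0

/-- Unnormalized L2-multicalibration error `Σ_p n(p)·K(p,f)²`. -/
noncomputable def uK2 {ι X : Type*} (A : Finset ι) (phat : ι → ℝ) (x : ι → X) (y : ι → ℝ)
    (f : X → ℝ) : ℝ :=
  ∑ p ∈ A.image phat, (nC A phat p : ℝ) * (Kerr A phat x y f p) ^ 2

/-!
Write `S(π, p) = Σ_{τ ∈ S(π,p)} f(x_τ)(y_τ − p̂_τ)`, so that `K = S / n` and each summand of
`uK₂` is `S² / n` (both sides vanish when `n = 0`). Appending a round with forecast `p₀` and
contribution `c = f(x)(y − p₀)` only changes the `p₀` summand, from `S² / n` to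
`(c + S)² / (n + 1)`, and since `c² ≤ f(x)² ≤ B` this increase is at most `B / n + 2c · S / n`
for `n ≥ 1`, and is `c² ≤ B` for `n = 0`.
-/

open Finset

section Transcript

variable {ι X : Type*} (A : Finset ι) (phat : ι → ℝ) (x : ι → X) (y : ι → ℝ) (f : X → ℝ)

noncomputable def biasSum (p : ℝ) : ℝ :=
  ∑ t ∈ A.filter (fun t => phat t = p), f (x t) * (y t - phat t)

theorem biasSum_eq_zero_of_nC_eq_zero {p : ℝ} (h : nC A phat p = 0) :
    biasSum A phat x y f p = 0 := by
  rw [biasSum, card_eq_zero.mp h, sum_empty]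

theorem Kerr_eq_biasSum_div (p : ℝ) :
    Kerr A phat x y f p = biasSum A phat x y f p / nC A phat p := by
  unfold Kerr
  split_ifs with hn
  · rw [biasSum, one_div_mul_eq_div]
  · rw [Nat.lt_one_iff.mp (not_le.mp hn), Nat.cast_zero, div_zero]

theorem nC_mul_Kerr_sq (p : ℝ) :
    (nC A phat p : ℝ) * Kerr A phat x y f p ^ 2 = biasSum A phat x y f p ^ 2 / nC A phat p := by
  rw [Kerr_eq_biasSum_div]
  rcases eq_or_ne (nC A phat p : ℝ) 0 with hn | hn
  · simp [hn]
  · field_simp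

/-- Forecasts that never occur contribute `0 / 0 = 0`, so the sum may range over any superset
of the forecasts made. -/
theorem uK2_eq_sum_of_image_subset {s : Finset ℝ} (hs : A.image phat ⊆ s) :
    uK2 A phat x y f = ∑ p ∈ s, biasSum A phat x y f p ^ 2 / nC A phat p := by
  rw [uK2, ← sum_subset hs]
  · exact sum_congr rfl fun p _ => nC_mul_Kerr_sq A phat x y f p
  · intro p _ hp
    have hn : nC A phat p = 0 :=
      card_eq_zero.mpr <| filter_eq_empty_iff.mpr fun t ht hpt =>
        hp (hpt ▸ mem_image_of_mem phat ht)
    rw [hn, Nat.cast_zero, div_zero]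

theorem notMem_filter_of_notMem {t₀ : ι} (ht₀ : t₀ ∉ A) :
    t₀ ∉ A.filter (fun t => phat t = phat t₀) :=
  fun h => ht₀ (mem_of_mem_filter t₀ h)

variable [DecidableEq ι] {t₀ : ι}

theorem filter_insert_of_ne {p : ℝ} (hp : p ≠ phat t₀) :
    (insert t₀ A).filter (fun t => phat t = p) = A.filter (fun t => phat t = p) := by
  rw [filter_insert, if_neg (Ne.symm hp)]

theorem nC_insert_of_ne {p : ℝ} (hp : p ≠ phat t₀) : nC (insert t₀ A) phat p = nC A phat p := by
  rw [nC, filter_insert_of_ne A phat hp, nC]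

theorem biasSum_insert_of_ne {p : ℝ} (hp : p ≠ phat t₀) :
    biasSum (insert t₀ A) phat x y f p = biasSum A phat x y f p := by
  rw [biasSum, filter_insert_of_ne A phat hp, biasSum]

variable {A}

theorem nC_insert_self (ht₀ : t₀ ∉ A) :
    nC (insert t₀ A) phat (phat t₀) = nC A phat (phat t₀) + 1 := by
  rw [nC, filter_insert, if_pos rfl, card_insert_of_notMem (notMem_filter_of_notMem A phat ht₀), nC]

theorem biasSum_insert_self (ht₀ : t₀ ∉ A) :
    biasSum (insert t₀ A) phat x y f (phat t₀) =
      f (x t₀) * (y t₀ - phat t₀) + biasSum A phat x y f (phat t₀) := by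
  rw [biasSum, filter_insert, if_pos rfl, sum_insert (notMem_filter_of_notMem A phat ht₀), biasSum]

theorem uK2_insert_sub (ht₀ : t₀ ∉ A) :
    uK2 (insert t₀ A) phat x y f - uK2 A phat x y f =
      (f (x t₀) * (y t₀ - phat t₀) + biasSum A phat x y f (phat t₀)) ^ 2
          / (nC A phat (phat t₀) + 1)
        - biasSum A phat x y f (phat t₀) ^ 2 / nC A phat (phat t₀) := by
  have hs : A.image phat ⊆ (insert t₀ A).image phat := image_subset_image (subset_insert t₀ A)
  rw [uK2_eq_sum_of_image_subset _ _ _ _ _ subset_rfl, uK2_eq_sum_of_image_subset _ _ _ _ _ hs,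
    ← sum_sub_distrib,
    sum_eq_single_of_mem (phat t₀) (mem_image_of_mem phat (mem_insert_self t₀ A))]
  · rw [nC_insert_self phat ht₀, biasSum_insert_self phat x y f ht₀, Nat.cast_succ]
  · intro p _ hp
    rw [nC_insert_of_ne A phat hp, biasSum_insert_of_ne A phat x y f hp, sub_self]

end Transcript

theorem add_sq_div_add_one_sub_sq_div_le {n c S B : ℝ} (hn : 0 < n) (hc : c ^ 2 ≤ B) :
    (c + S) ^ 2 / (n + 1) - S ^ 2 / n ≤ B / n + 2 * c * (S / n) := by
  rw [div_sub_div _ _ (by positivity) hn.ne', div_le_iff₀ (by positivity)]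
  have slack : ((B / n + 2 * c * (S / n)) * ((n + 1) * n) - ((c + S) ^ 2 * n - (n + 1) * S ^ 2))
      = (n + 1) * (B - c ^ 2) + (c + S) ^ 2 := by
    field_simp
    ring
  nlinarith [sq_nonneg (c + S)]

theorem sq_sub_le_one_of_mem_Icc {y p : ℝ} (hy : y = 0 ∨ y = 1) (hp : p ∈ Set.Icc (0 : ℝ) 1) :
    (y - p) ^ 2 ≤ 1 := by
  obtain ⟨hp0, hp1⟩ := hp
  rcases hy with rfl | rfl <;> nlinarith

/-- Appending a round `(x t₀, y t₀, p̂ t₀)` increases the unnormalized L2-multicalibration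
error by at most `B/n(π,p̂) + 2·f(x)(y − p̂)·K(π,p̂,f)` when `n(π,p̂) ≥ 1`, and by at most `B`
otherwise. -/
theorem uK2_increase_bound {ι X : Type*} [DecidableEq ι]
    (π : Finset ι) (t0 : ι) (ht0 : t0 ∉ π)
    (phat : ι → ℝ) (x : ι → X) (y : ι → ℝ)
    (hy : y t0 = 0 ∨ y t0 = 1) (hp : phat t0 ∈ Set.Icc (0:ℝ) 1)
    (B : ℝ) (f : X → ℝ) (hf : ∀ z, (f z) ^ 2 ≤ B) :
    (1 ≤ nC π phat (phat t0) →
      uK2 (insert t0 π) phat x y f - uK2 π phat x y f ≤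
        B / (nC π phat (phat t0) : ℝ) +
          2 * (f (x t0) * (y t0 - phat t0)) * Kerr π phat x y f (phat t0)) ∧
    (nC π phat (phat t0) = 0 →
      uK2 (insert t0 π) phat x y f - uK2 π phat x y f ≤ B) := by
  have hc : (f (x t0) * (y t0 - phat t0)) ^ 2 ≤ B := by
    rw [mul_pow]
    calc f (x t0) ^ 2 * (y t0 - phat t0) ^ 2 ≤ f (x t0) ^ 2 * 1 :=
          mul_le_mul_of_nonneg_left (sq_sub_le_one_of_mem_Icc hy hp) (sq_nonneg _)
      _ ≤ B := by rw [mul_one]; exact hf (x t0)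
  rw [uK2_insert_sub phat x y f ht0]
  refine ⟨fun hn => ?_, fun hn => ?_⟩
  · rw [Kerr_eq_biasSum_div π phat x y f]
    exact add_sq_div_add_one_sub_sq_div_le (by exact_mod_cast hn) hc
  · simpa [hn, biasSum_eq_zero_of_nC_eq_zero π phat x y f hn] using hc
end
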